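/- Let P, Q be strings of positive length p, let n be a positive integer, and set d = ⌊n/p⌋ and r = n mod p. Let X = P^∞[0..n) and Y = Q^∞[0..n). Then ED(X, Y) ≤ ED(P[0..r), Q[0..r)) + min over integers s of (d · ED(P, Q^{↻s}) + 2|s|), and this quantity is at most 3 · ED(X, Y). -/

import Mathlib

/-- Costs for edit operations (removed from Mathlib; old definition restored). -/
structure Levenshtein.Cost (α β δ : Type*) where
  /-- Cost to delete an element from a list. -/
  delete : α → δ
  /-- Cost in insert an element into a list. -/
  insert : β → δ
  /-- Cost to substitute one element for another in a list. -/
  substitute : α → β → δ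

/-- The default cost structure, for which all operations cost `1`. -/
def Levenshtein.defaultCost {α : Type*} [DecidableEq α] : Levenshtein.Cost α α ℕ where
  delete _ := 1
  insert _ := 1
  substitute a b := if a = b then 0 else 1

/-- (Private) helper for `suffixLevenshtein`. -/
def Levenshtein.impl {α β δ : Type*} [Add δ] [Zero δ] [Min δ] (C : Levenshtein.Cost α β δ)
    (xs : List α) (y : β) (d : {r : List δ // 0 < r.length}) : {r : List δ // 0 < r.length} :=
  let ⟨ds, w⟩ := d
  xs.zip (ds.zip ds.tail) |>.foldr
    (init := ⟨[C.insert y + ds.getLast (List.ne_nil_of_length_pos w)], by simp⟩)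
    (fun ⟨x, d₀, d₁⟩ ⟨r, w⟩ =>
      ⟨min (C.delete x + r[0]) (min (C.insert y + d₀) (C.substitute x y + d₁)) :: r, by simp⟩)

/-- `suffixLevenshtein C xs ys` computes the list of Levenshtein distances
from each suffix of `xs` to `ys`. -/
def suffixLevenshtein {α β δ : Type*} [Add δ] [Zero δ] [Min δ] (C : Levenshtein.Cost α β δ)
    (xs : List α) (ys : List β) : {r : List δ // 0 < r.length} :=
  ys.foldr
    (Levenshtein.impl C xs)
    (xs.foldr (init := ⟨[0], by simp⟩) (fun a ⟨r, w⟩ => ⟨(C.delete a + r[0]) :: r, by simp⟩))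

/-- The Levenshtein distance between two lists. -/
def levenshtein {α β δ : Type*} [Add δ] [Zero δ] [Min δ] (C : Levenshtein.Cost α β δ)
    (xs : List α) (ys : List β) : δ :=
  let ⟨r, w⟩ := suffixLevenshtein C xs ys
  r[0]

/-- Levenshtein edit distance between two lists (unit costs). -/
def ED {α : Type*} [DecidableEq α] (X Y : List α) : ℕ :=
  levenshtein Levenshtein.defaultCost X Y

/-- The length-`n` prefix `P^∞[0..n)` of the infinite repetition of `P`. -/
def prefRep {α : Type*} (P : List α) (n : ℕ) : List α :=
  ((List.replicate n P).flatten).take n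

/-- Cyclic rotation of `Q` by an integer `s` (taken modulo `|Q|`). -/
def rotZ {α : Type*} (Q : List α) (s : ℤ) : List α :=
  Q.rotate (s % (Q.length : ℤ)).toNat

/-!
Write `X = P^d P[0..r)` and `Y = Q^d Q[0..r)`. For the upper bound, align `P^d` with
`(Q^{↻s})^d` block by block, at cost `d·ED(P, Q^{↻s})`, and turn `(Q^{↻s})^d` into `Q^d` by moving
`|s|` letters from one end to the other, at cost `2|s|`.

For the lower bound, cut an optimal alignment of `X` with `Y` at the block boundaries of `X`: the
`i`-th copy of `P` is aligned with a factor `Cᵢ` of `Y` at cost `cᵢ`, and `P[0..r)` with a suffix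
`C'` at cost `c'`. If `Cᵢ` starts at position `aᵢ`, the length-`p` window of `Q^∞` at `aᵢ` is
`Q^{↻sᵢ}` with `sᵢ = aᵢ - ip`, and it is within `||Cᵢ| - p| ≤ cᵢ` edits of `Cᵢ`; so
`ED(P, Q^{↻sᵢ}) ≤ 2cᵢ`, and the cheapest block gives `d·ED(P, Q^{↻s}) ≤ 2∑cᵢ`. Since `|X| = |Y|`,
the shift `sᵢ` has to be paid for by length differences on both sides of the cut, so
`2|sᵢ| ≤ ∑cᵢ + c'`; in the same way `ED(P[0..r), Q[0..r)) ≤ 2c'`. Summing, the right-hand side is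
at most `3(∑cᵢ + c') ≤ 3·ED(X, Y)`.
-/

section LevenshteinRecursion

open Levenshtein

variable {α β δ : Type*} [Add δ] [Zero δ] [Min δ] (C : Cost α β δ)

theorem Levenshtein.impl_cons_cons (x : α) (xs : List α) (y : β) (d d' : δ) (ds : List δ) :
    (impl C (x :: xs) y ⟨d :: d' :: ds, by simp⟩).1 =
      let r := impl C xs y ⟨d' :: ds, by simp⟩
      min (C.delete x + r.1[0]'r.2) (min (C.insert y + d) (C.substitute x y + d')) :: r.1 :=
  rfl

theorem suffixLevenshtein_eq_cons (xs : List α) (ys : List β) :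
    suffixLevenshtein C xs ys =
      ⟨levenshtein C xs ys :: (suffixLevenshtein C xs ys).1.tail, by simp⟩ := by
  unfold levenshtein
  obtain ⟨_ | _, _⟩ := suffixLevenshtein C xs ys
  · contradiction
  · rfl

theorem suffixLevenshtein_nil_left (ys : List β) :
    suffixLevenshtein C ([] : List α) ys = ⟨[levenshtein C [] ys], by simp⟩ := by
  induction ys with
  | nil => rfl
  | cons y ys ih =>
    show impl C [] y (suffixLevenshtein C [] ys) =
      ⟨[(impl C [] y (suffixLevenshtein C [] ys)).1[0]'(impl C [] y _).2], by simp⟩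
    rw [ih]
    rfl

theorem suffixLevenshtein_cons_left (x : α) (xs : List α) (ys : List β) :
    suffixLevenshtein C (x :: xs) ys =
      ⟨levenshtein C (x :: xs) ys :: (suffixLevenshtein C xs ys).1, by simp⟩ := by
  induction ys with
  | nil => rfl
  | cons y ys ih =>
    rw [suffixLevenshtein_eq_cons]
    congr 2
    show (impl C (x :: xs) y (suffixLevenshtein C (x :: xs) ys)).1.tail = _
    rw [ih, suffixLevenshtein_eq_cons C xs ys, impl_cons_cons]
    show (impl C xs y ⟨_, _⟩).1 = (impl C xs y (suffixLevenshtein C xs ys)).1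
    rw [← suffixLevenshtein_eq_cons]

theorem levenshtein_cons_nil (x : α) (xs : List α) :
    levenshtein C (x :: xs) ([] : List β) = C.delete x + levenshtein C xs [] := rfl

theorem levenshtein_nil_cons (y : β) (ys : List β) :
    levenshtein C ([] : List α) (y :: ys) = C.insert y + levenshtein C [] ys := by
  show (impl C [] y (suffixLevenshtein C [] ys)).1[0]'(impl C [] y _).2 = _
  rw [suffixLevenshtein_nil_left]
  rfl

theorem levenshtein_cons_cons (x : α) (xs : List α) (y : β) (ys : List β) :
    levenshtein C (x :: xs) (y :: ys) =
      min (C.delete x + levenshtein C xs (y :: ys))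
        (min (C.insert y + levenshtein C (x :: xs) ys)
          (C.substitute x y + levenshtein C xs ys)) := by
  show (impl C (x :: xs) y (suffixLevenshtein C (x :: xs) ys)).1[0]'(impl C _ y _).2 = _
  rw [suffixLevenshtein_cons_left, suffixLevenshtein_eq_cons C xs ys]
  simp only [impl_cons_cons, List.getElem_cons_zero]
  rw [← suffixLevenshtein_eq_cons]
  rfl

end LevenshteinRecursion

section EditDistance

variable {α : Type*} [DecidableEq α]

theorem ED_cons_nil (x : α) (xs : List α) : ED (x :: xs) [] = ED xs [] + 1 :=
  (levenshtein_cons_nil _ x xs).trans (add_comm _ _)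

theorem ED_nil_cons (y : α) (ys : List α) : ED [] (y :: ys) = ED [] ys + 1 :=
  (levenshtein_nil_cons _ y ys).trans (add_comm _ _)

theorem ED_cons_cons (x y : α) (xs ys : List α) :
    ED (x :: xs) (y :: ys) =
      min (ED xs (y :: ys) + 1)
        (min (ED (x :: xs) ys + 1) (ED xs ys + if x = y then 0 else 1)) := by
  simp only [ED, levenshtein_cons_cons, Levenshtein.defaultCost, add_comm]

theorem ED_cons_left_le (x : α) (xs ys : List α) : ED (x :: xs) ys ≤ ED xs ys + 1 := by
  cases ys with
  | nil => exact (ED_cons_nil x xs).le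
  | cons y ys => exact (ED_cons_cons x y xs ys).trans_le (min_le_left _ _)

theorem ED_cons_right_le (y : α) (xs ys : List α) : ED xs (y :: ys) ≤ ED xs ys + 1 := by
  cases xs with
  | nil => exact (ED_nil_cons y ys).le
  | cons x xs =>
    rw [ED_cons_cons]
    exact (min_le_right _ _).trans (min_le_left _ _)

theorem ED_cons_cons_le (x y : α) (xs ys : List α) :
    ED (x :: xs) (y :: ys) ≤ ED xs ys + if x = y then 0 else 1 := by
  rw [ED_cons_cons]
  exact (min_le_right _ _).trans (min_le_right _ _)

theorem ED_nil_left (ys : List α) : ED [] ys = ys.length := by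
  induction ys with
  | nil => rfl
  | cons y ys ih => rw [ED_nil_cons, ih, List.length_cons]

theorem ED_nil_right (xs : List α) : ED xs [] = xs.length := by
  induction xs with
  | nil => rfl
  | cons x xs ih => rw [ED_cons_nil, ih, List.length_cons]

/-- `Edits xs ys n`: `xs` can be turned into `ys` by at most `n` unit-cost edits (the budget of
`nil` is arbitrary, which makes the relation monotone in `n`). -/
inductive Edits : List α → List α → ℕ → Prop
  | nil (n : ℕ) : Edits [] [] n
  | delete (x : α) {xs ys n} : Edits xs ys n → Edits (x :: xs) ys (n + 1)
  | insert (y : α) {xs ys n} : Edits xs ys n → Edits xs (y :: ys) (n + 1)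
  | subst (x y : α) {xs ys n} :
      Edits xs ys n → Edits (x :: xs) (y :: ys) (n + if x = y then 0 else 1)

namespace Edits

theorem mono {xs ys : List α} {m n : ℕ} (h : Edits xs ys m) (hmn : m ≤ n) : Edits xs ys n := by
  induction h generalizing n with
  | nil => exact nil n
  | delete x _ ih =>
    obtain ⟨n, rfl⟩ : ∃ k, n = k + 1 := ⟨n - 1, by omega⟩
    exact (ih (by omega)).delete x
  | insert y _ ih =>
    obtain ⟨n, rfl⟩ : ∃ k, n = k + 1 := ⟨n - 1, by omega⟩
    exact (ih (by omega)).insert y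
  | @subst x y _ _ k _ ih =>
    obtain ⟨n, rfl⟩ := Nat.exists_eq_add_of_le hmn
    simpa [add_right_comm] using (ih (Nat.le_add_right k n)).subst x y

theorem ED_le {xs ys : List α} {n : ℕ} (h : Edits xs ys n) : ED xs ys ≤ n := by
  induction h with
  | nil => exact Nat.zero_le _
  | delete x _ ih => exact (ED_cons_left_le _ _ _).trans (by omega)
  | insert y _ ih => exact (ED_cons_right_le _ _ _).trans (by omega)
  | subst x y _ ih => exact (ED_cons_cons_le _ _ _ _).trans (by omega)

theorem nil_left (ys : List α) : Edits [] ys ys.length := by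
  induction ys with
  | nil => exact nil 0
  | cons y ys ih => exact ih.insert y

theorem nil_right (xs : List α) : Edits xs [] xs.length := by
  induction xs with
  | nil => exact nil 0
  | cons x xs ih => exact ih.delete x

theorem refl (xs : List α) : Edits xs xs 0 := by
  induction xs with
  | nil => exact nil 0
  | cons x xs ih => simpa using ih.subst x x

theorem of_ED (xs ys : List α) : Edits xs ys (ED xs ys) := by
  induction xs generalizing ys with
  | nil => simpa [ED_nil_left] using nil_left ys
  | cons x xs ihx =>
    induction ys with
    | nil => simpa [ED_nil_right] using nil_right (x :: xs)
    | cons y ys ihy =>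
      rw [ED_cons_cons]
      rcases min_choice (ED xs (y :: ys) + 1)
        (min (ED (x :: xs) ys + 1) (ED xs ys + if x = y then 0 else 1)) with h | h <;> rw [h]
      · exact (ihx _).delete x
      rcases min_choice (ED (x :: xs) ys + 1) (ED xs ys + if x = y then 0 else 1) with h | h <;>
        rw [h]
      · exact ihy.insert y
      · exact (ihx ys).subst x y

theorem symm {xs ys : List α} {n : ℕ} (h : Edits xs ys n) : Edits ys xs n := by
  induction h with
  | nil n => exact nil n
  | delete x _ ih => exact ih.insert x
  | insert y _ ih => exact ih.delete y
  | subst x y _ ih => simpa only [eq_comm] using ih.subst y x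

theorem append {xs ys xs' ys' : List α} {m n : ℕ} (h : Edits xs ys m) (h' : Edits xs' ys' n) :
    Edits (xs ++ xs') (ys ++ ys') (m + n) := by
  induction h with
  | nil m => exact h'.mono (Nat.le_add_left n m)
  | delete x _ ih => simpa only [List.cons_append, add_right_comm] using ih.delete x
  | insert y _ ih => simpa only [List.cons_append, add_right_comm] using ih.insert y
  | subst x y _ ih => simpa only [List.cons_append, add_right_comm] using ih.subst x y

theorem natAbs_length_sub_le {xs ys : List α} {n : ℕ} (h : Edits xs ys n) :
    ((xs.length : ℤ) - ys.length).natAbs ≤ n := by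
  induction h with
  | nil => simp
  | delete | insert | subst => simp only [List.length_cons, Nat.cast_succ]; omega

theorem exists_split {xs xs' ys : List α} {n : ℕ} (h : Edits (xs ++ xs') ys n) :
    ∃ zs zs' m m', ys = zs ++ zs' ∧ m + m' = n ∧ Edits xs zs m ∧ Edits xs' zs' m' := by
  generalize hx : xs ++ xs' = l at h
  induction h generalizing xs with
  | nil n =>
    obtain ⟨rfl, rfl⟩ := List.append_eq_nil_iff.1 hx
    exact ⟨[], [], 0, n, rfl, zero_add n, nil 0, nil n⟩
  | insert y _ ih =>
    obtain ⟨zs, zs', m, m', rfl, rfl, h, h'⟩ := ih hx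
    exact ⟨y :: zs, zs', m + 1, m', rfl, by omega, h.insert y, h'⟩
  | @delete x _ _ n h ih =>
    cases xs with
    | nil =>
      rw [List.nil_append] at hx
      exact ⟨[], _, 0, n + 1, rfl, zero_add _, nil 0, hx ▸ h.delete x⟩
    | cons x' xs =>
      obtain ⟨rfl, hx'⟩ := List.cons_eq_cons.1 hx
      obtain ⟨zs, zs', m, m', rfl, rfl, h, h'⟩ := ih hx'
      exact ⟨zs, zs', m + 1, m', rfl, by omega, h.delete x', h'⟩
  | @subst x y _ _ n h ih =>
    cases xs with
    | nil =>
      rw [List.nil_append] at hx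
      exact ⟨[], _, 0, _, rfl, zero_add _, nil 0, hx ▸ h.subst x y⟩
    | cons x' xs =>
      obtain ⟨rfl, hx'⟩ := List.cons_eq_cons.1 hx
      obtain ⟨zs, zs', m, m', rfl, rfl, h, h'⟩ := ih hx'
      exact ⟨y :: zs, zs', _, m', rfl, by omega, h.subst x' y, h'⟩

theorem trans {xs ys zs : List α} {m n : ℕ} (h : Edits xs ys m) (h' : Edits ys zs n) :
    Edits xs zs (m + n) := by
  match h, h' with
  | nil _, h' => exact h'.mono (Nat.le_add_left n _)
  | delete x h, h' => exact ((h.trans h').delete x).mono (by omega)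
  | h, insert z h' => exact (h.trans h').insert z
  | insert y h, delete _ h' => exact (h.trans h').mono (by omega)
  | insert y h, subst _ z h' => exact ((h.trans h').insert z).mono (by omega)
  | subst x y h, delete _ h' => exact ((h.trans h').delete x).mono (by omega)
  | subst x y h, subst _ z h' =>
    refine ((h.trans h').subst x z).mono ?_
    split_ifs <;> simp_all <;> omega
termination_by xs.length + ys.length + zs.length

end Edits

theorem ED_comm (xs ys : List α) : ED xs ys = ED ys xs :=
  le_antisymm (Edits.of_ED ys xs).symm.ED_le (Edits.of_ED xs ys).symm.ED_le

theorem ED_triangle (xs ys zs : List α) : ED xs zs ≤ ED xs ys + ED ys zs :=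
  ((Edits.of_ED xs ys).trans (Edits.of_ED ys zs)).ED_le

theorem ED_append_le (xs ys xs' ys' : List α) :
    ED (xs ++ xs') (ys ++ ys') ≤ ED xs ys + ED xs' ys' :=
  ((Edits.of_ED xs ys).append (Edits.of_ED xs' ys')).ED_le

theorem natAbs_length_sub_length_le_ED (xs ys : List α) :
    ((xs.length : ℤ) - ys.length).natAbs ≤ ED xs ys :=
  (Edits.of_ED xs ys).natAbs_length_sub_le

theorem exists_append_eq_and_ED_add_ED_le (xs xs' ys : List α) :
    ∃ zs zs', ys = zs ++ zs' ∧ ED xs zs + ED xs' zs' ≤ ED (xs ++ xs') ys := by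
  obtain ⟨zs, zs', m, m', rfl, hm, h, h'⟩ := (Edits.of_ED (xs ++ xs') ys).exists_split
  exact ⟨zs, zs', rfl, hm ▸ add_le_add h.ED_le h'.ED_le⟩

theorem ED_append_right_le (xs ys : List α) : ED xs (xs ++ ys) ≤ ys.length := by
  simpa using ((Edits.refl xs).append (Edits.nil_left ys)).ED_le

theorem ED_append_left_le (xs ys : List α) : ED xs (ys ++ xs) ≤ ys.length := by
  simpa using ((Edits.nil_left ys).append (Edits.refl xs)).ED_le

theorem ED_self (xs : List α) : ED xs xs = 0 :=
  Nat.le_zero.1 (Edits.refl xs).ED_le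

theorem List.IsPrefix.ED_le {xs ys : List α} (h : xs <+: ys) :
    ED xs ys ≤ ys.length - xs.length := by
  obtain ⟨zs, rfl⟩ := h
  simpa using ED_append_right_le xs zs

theorem List.IsSuffix.ED_le {xs ys : List α} (h : xs <:+ ys) :
    ED xs ys ≤ ys.length - xs.length := by
  obtain ⟨zs, rfl⟩ := h
  simpa using ED_append_left_le xs zs

theorem ED_le_two_mul_of_length_eq {xs ys zs : List α} (hzs : zs.length = xs.length)
    (h : ED ys zs ≤ ((ys.length : ℤ) - zs.length).natAbs) : ED xs zs ≤ 2 * ED xs ys := by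
  have := natAbs_length_sub_length_le_ED xs ys
  have := ED_triangle xs ys zs
  omega

theorem ED_take_le_two_mul (xs l : List α) (m : ℕ) (h : xs.length ≤ l.length) :
    ED xs (l.take xs.length) ≤ 2 * ED xs (l.take m) := by
  refine ED_le_two_mul_of_length_eq (by simpa using h) ?_
  rcases le_total m xs.length with hm | hm
  · have := (List.take_prefix_take_left (l := l) hm).ED_le
    omega
  · have := (List.take_prefix_take_left (l := l) hm).ED_le
    rw [ED_comm]
    omega

theorem ED_drop_le_two_mul (xs l : List α) (m : ℕ) (h : xs.length ≤ l.length) :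
    ED xs (l.drop (l.length - xs.length)) ≤ 2 * ED xs (l.drop m) := by
  refine ED_le_two_mul_of_length_eq (by simp; omega) ?_
  rcases le_total m (l.length - xs.length) with hm | hm
  · have := (List.drop_suffix_drop_left l hm).ED_le
    rw [ED_comm]
    omega
  · have := (List.drop_suffix_drop_left l hm).ED_le
    omega

theorem two_mul_natAbs_length_sub_le_ED_add_ED {xs xs' ys ys' : List α}
    (h : (xs ++ xs').length = (ys ++ ys').length) :
    2 * ((xs.length : ℤ) - ys.length).natAbs ≤ ED xs ys + ED xs' ys' := by
  have := natAbs_length_sub_length_le_ED xs ys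
  have := natAbs_length_sub_length_le_ED xs' ys'
  simp only [List.length_append] at h
  omega

end EditDistance

section Periodic

variable {α : Type*}

theorem length_flatten_replicate (Q : List α) (m : ℕ) :
    ((List.replicate m Q).flatten).length = m * Q.length := by
  simp

theorem take_flatten_replicate (Q : List α) {m t : ℕ} (ht : t ≤ Q.length) (hm : t ≤ m * Q.length) :
    ((List.replicate m Q).flatten).take t = Q.take t := by
  cases m with
  | zero => simp_all
  | succ m => rw [List.replicate_succ, List.flatten_cons, List.take_append_of_le_length ht]

theorem drop_flatten_replicate (Q : List α) (m q : ℕ) :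
    ((List.replicate m Q).flatten).drop (q * Q.length) = (List.replicate (m - q) Q).flatten := by
  induction q generalizing m with
  | zero => simp
  | succ q ih =>
    cases m with
    | zero => simp
    | succ m =>
      rw [List.replicate_succ, List.flatten_cons, Nat.succ_mul, add_comm,
        List.drop_length_add_append, ih, Nat.add_sub_add_right]

theorem flatten_replicate_succ_append (A B : List α) (e : ℕ) :
    (List.replicate (e + 1) (A ++ B)).flatten = A ++ (List.replicate e (B ++ A)).flatten ++ B := by
  induction e with
  | zero => simp
  | succ e ih =>
    rw [List.replicate_succ, List.flatten_cons, ih, List.replicate_succ (n := e), List.flatten_cons]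
    simp

theorem take_drop_flatten_replicate (Q : List α) {m a : ℕ} (h : a + Q.length ≤ m * Q.length) :
    (((List.replicate m Q).flatten).drop a).take Q.length = Q.rotate (a % Q.length) := by
  obtain rfl | hQ := eq_or_ne Q []
  · simp
  set p := Q.length
  have hp : 0 < p := List.length_pos_iff.2 hQ
  set t := a % p
  have ht : t < p := Nat.mod_lt a hp
  have hdm : p * (a / p) + t = a := Nat.div_add_mod a p
  obtain ⟨k, hk⟩ : ∃ k, m = a / p + (k + 1) := by
    have : (a / p + 1) * p ≤ m * p := by nlinarith
    exact ⟨m - a / p - 1, by have := Nat.le_of_mul_le_mul_right this hp; omega⟩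
  have htk : t ≤ k * p := by subst hk; nlinarith
  rw [← Nat.div_add_mod a p, ← List.drop_drop, mul_comm, drop_flatten_replicate, hk,
    Nat.add_sub_cancel_left, List.replicate_succ, List.flatten_cons,
    List.drop_append_of_le_length ht.le, List.take_append, List.take_of_length_le (by simp [p]),
    List.length_drop, Nat.sub_sub_self ht.le, take_flatten_replicate Q ht.le htk,
    List.rotate_eq_drop_append_take ht.le]

theorem prefRep_eq (P : List α) (n : ℕ) :
    prefRep P n = (List.replicate (n / P.length) P).flatten ++ P.take (n % P.length) := by
  obtain rfl | hP := eq_or_ne P []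
  · simp [prefRep]
  have hp : 0 < P.length := List.length_pos_iff.2 hP
  set p := P.length
  have hdm : p * (n / p) + n % p = n := Nat.div_add_mod n p
  have hq : n / p + n % p ≤ n := by have := Nat.le_mul_of_pos_left (n / p) hp; omega
  have ht : n % p ≤ (n - n / p) * p :=
    (Nat.le_sub_of_add_le' hq).trans (Nat.le_mul_of_pos_right _ hp)
  have hsplit : List.replicate n P = List.replicate (n / p) P ++ List.replicate (n - n / p) P := by
    rw [← List.replicate_add, Nat.add_sub_cancel' (Nat.div_le_self n p)]
  have hlen : ((List.replicate (n / p) P).flatten).length = n - n % p := by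
    rw [length_flatten_replicate]
    change n / p * p = _
    rw [Nat.mul_comm]; omega
  rw [prefRep, hsplit, List.flatten_append, List.take_append, hlen,
    List.take_of_length_le (by omega), Nat.sub_sub_self (Nat.mod_le n p),
    take_flatten_replicate P (Nat.mod_lt n hp).le ht]

theorem rotZ_natCast_sub_mul (Q : List α) (a i : ℕ) :
    rotZ Q (a - i * Q.length) = Q.rotate (a % Q.length) := by
  rw [rotZ, Int.sub_mul_emod_self_right, ← Int.natCast_mod, Int.toNat_natCast]

theorem List.flatten_eq_flatten_take_append_getElem {L : List (List α)} (i : Fin L.length) :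
    L.flatten = (L.take i).flatten ++ (L[i] ++ (L.drop (i + 1)).flatten) := by
  conv_lhs => rw [← List.take_append_drop i L, List.drop_eq_getElem_cons i.2]
  rw [List.flatten_append, List.flatten_cons]
  rfl

theorem min_toNat_emod_le_natAbs (s : ℤ) {p : ℕ} (hp : 0 < p) :
    min (s % p).toNat (p - (s % p).toNat) ≤ s.natAbs := by
  have h₀ : 0 ≤ s % p := Int.emod_nonneg s (by omega)
  have h₁ : s % p < p := Int.emod_lt_of_pos s (by omega)
  have hdm : s % p + p * (s / p) = s := Int.emod_add_mul_ediv s p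
  rcases le_or_gt 0 (s / p) with hq | hq
  · have : 0 ≤ (p : ℤ) * (s / p) := mul_nonneg (by omega) hq
    omega
  · have : (p : ℤ) * (s / p) ≤ p * (-1) := mul_le_mul_of_nonneg_left (by omega) (by omega)
    omega

end Periodic

section PeriodicEditDistance

variable {α : Type*} [DecidableEq α]

theorem ED_flatten_replicate_le_sum (P : List α) (Cs : List (List α)) :
    ED (List.replicate Cs.length P).flatten Cs.flatten ≤ (Cs.map (ED P)).sum := by
  induction Cs with
  | nil => exact (ED_self []).le
  | cons C Cs ih =>
    simpa only [List.length_cons, List.replicate_succ, List.flatten_cons, List.map_cons,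
      List.sum_cons] using (ED_append_le _ _ _ _).trans (Nat.add_le_add_left ih _)

theorem ED_flatten_replicate_le (P R : List α) (d : ℕ) :
    ED (List.replicate d P).flatten (List.replicate d R).flatten ≤ d * ED P R := by
  simpa using ED_flatten_replicate_le_sum P (List.replicate d R)

theorem ED_append_comm_le (xs ys : List α) : ED (xs ++ ys) (ys ++ xs) ≤ 2 * ys.length := by
  calc ED (xs ++ ys) (ys ++ xs) ≤ ED (xs ++ ys) xs + ED xs (ys ++ xs) := ED_triangle _ _ _
    _ ≤ ys.length + ys.length :=
      add_le_add ((ED_comm _ _).trans_le (ED_append_right_le xs ys)) (ED_append_left_le xs ys)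
    _ = 2 * ys.length := (two_mul _).symm

theorem ED_flatten_replicate_append_comm_le (A B : List α) (d : ℕ) :
    ED (List.replicate d (B ++ A)).flatten (List.replicate d (A ++ B)).flatten ≤ 2 * A.length := by
  cases d with
  | zero => simp [ED_self]
  | succ e =>
    rw [flatten_replicate_succ_append A B, List.replicate_succ', List.flatten_concat]
    simpa only [List.append_assoc] using
      ED_append_comm_le ((List.replicate e (B ++ A)).flatten ++ B) A

theorem ED_flatten_replicate_rotate_le (Q : List α) (d : ℕ) {t : ℕ} (ht : t ≤ Q.length) :
    ED (List.replicate d (Q.rotate t)).flatten (List.replicate d Q).flatten ≤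
      2 * min t (Q.length - t) := by
  have hrot : Q.rotate t = Q.drop t ++ Q.take t := List.rotate_eq_drop_append_take ht
  have hQ : Q = Q.take t ++ Q.drop t := (List.take_append_drop t Q).symm
  have h₁ := ED_flatten_replicate_append_comm_le (Q.take t) (Q.drop t) d
  have h₂ := ED_flatten_replicate_append_comm_le (Q.drop t) (Q.take t) d
  rw [← hrot, ← hQ, List.length_take_of_le ht] at h₁
  rw [← hrot, ← hQ, List.length_drop, ED_comm] at h₂
  omega

theorem ED_flatten_replicate_rotZ_le (Q : List α) (d : ℕ) (s : ℤ) :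
    ED (List.replicate d (rotZ Q s)).flatten (List.replicate d Q).flatten ≤ 2 * s.natAbs := by
  obtain rfl | hQ := eq_or_ne Q []
  · simp [rotZ, ED_self]
  have hp : 0 < Q.length := List.length_pos_iff.2 hQ
  have ht : (s % Q.length).toNat < Q.length := by
    have := Int.emod_lt_of_pos s (Int.natCast_pos.2 hp); omega
  have := min_toNat_emod_le_natAbs s hp
  exact (ED_flatten_replicate_rotate_le Q d ht.le).trans (by omega)

theorem ED_flatten_replicate_append_take_le (P Q : List α) (d r : ℕ) (s : ℤ) :
    ED ((List.replicate d P).flatten ++ P.take r) ((List.replicate d Q).flatten ++ Q.take r) ≤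
      ED (P.take r) (Q.take r) + (d * ED P (rotZ Q s) + 2 * s.natAbs) := by
  have :=
    ED_append_le (List.replicate d P).flatten (List.replicate d Q).flatten (P.take r) (Q.take r)
  have := ED_triangle (List.replicate d P).flatten (List.replicate d (rotZ Q s)).flatten
    (List.replicate d Q).flatten
  have := ED_flatten_replicate_le P (rotZ Q s) d
  have := ED_flatten_replicate_rotZ_le Q d s
  omega

theorem exists_flatten_append_and_sum_ED_le (P T V : List α) (d : ℕ) :
    ∃ (Cs : List (List α)) (C' : List α), Cs.length = d ∧ V = Cs.flatten ++ C' ∧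
      (Cs.map (ED P)).sum + ED T C' ≤ ED ((List.replicate d P).flatten ++ T) V := by
  induction d generalizing V with
  | zero => exact ⟨[], V, rfl, rfl, by simp⟩
  | succ d ih =>
    rw [List.replicate_succ, List.flatten_cons, List.append_assoc]
    obtain ⟨C, V', rfl, hsplit⟩ :=
      exists_append_eq_and_ED_add_ED_le P ((List.replicate d P).flatten ++ T) V
    obtain ⟨Cs, C', rfl, rfl, hCs⟩ := ih V'
    refine ⟨C :: Cs, C', rfl, by simp, ?_⟩
    simp only [List.map_cons, List.sum_cons]
    omega

theorem ED_rotate_le_two_mul_ED_getElem (P Q : List α) (hPQ : P.length = Q.length) {m : ℕ}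
    {Cs : List (List α)} (hCs : Cs.flatten <+: (List.replicate m Q).flatten) (i : Fin Cs.length)
    (hi : (Cs.take i).flatten.length + Q.length ≤ m * Q.length) :
    ED P (Q.rotate ((Cs.take i).flatten.length % Q.length)) ≤ 2 * ED P Cs[i] := by
  set W := (List.replicate m Q).flatten
  set a := (Cs.take i).flatten.length
  obtain ⟨E, hE⟩ := hCs
  have hblock : (W.drop a).take Cs[i].length = Cs[i] := by
    rw [← hE, List.flatten_eq_flatten_take_append_getElem i, List.append_assoc, List.drop_left,
      List.append_assoc, List.take_left]
  have hlen : P.length ≤ (W.drop a).length := by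
    rw [List.length_drop, length_flatten_replicate]; omega
  calc ED P (Q.rotate (a % Q.length)) = ED P ((W.drop a).take P.length) := by
        rw [hPQ, take_drop_flatten_replicate Q hi]
    _ ≤ 2 * ED P ((W.drop a).take Cs[i].length) := ED_take_le_two_mul P _ _ hlen
    _ = 2 * ED P Cs[i] := by rw [hblock]

theorem two_mul_natAbs_length_flatten_take_sub_le (P Q : List α) (hPQ : P.length = Q.length)
    (r : ℕ) {Cs : List (List α)} {C' : List α}
    (hY : (List.replicate Cs.length Q).flatten ++ Q.take r = Cs.flatten ++ C') {i : ℕ}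
    (hi : i ≤ Cs.length) :
    2 * (((Cs.take i).flatten.length : ℤ) - i * Q.length).natAbs ≤
      (Cs.map (ED P)).sum + ED (P.take r) C' := by
  have hdrift := two_mul_natAbs_length_sub_le_ED_add_ED
    (xs := (List.replicate i P).flatten)
    (xs' := (List.replicate (Cs.length - i) P).flatten ++ P.take r)
    (ys := (Cs.take i).flatten) (ys' := (Cs.drop i).flatten ++ C') <| by
      rw [← List.append_assoc, ← List.flatten_append, ← List.replicate_add,
        Nat.add_sub_cancel' hi, ← List.append_assoc, ← List.flatten_append,
        List.take_append_drop, ← hY]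
      simp [hPQ]
  have h₁ := ED_flatten_replicate_le_sum P (Cs.take i)
  have h₂ := ED_flatten_replicate_le_sum P (Cs.drop i)
  have h₃ :=
    ED_append_le (List.replicate (Cs.length - i) P).flatten (Cs.drop i).flatten (P.take r) C'
  rw [List.length_take_of_le hi] at h₁
  rw [List.length_drop] at h₂
  have hsum := List.sum_take_add_sum_drop (Cs.map (ED P)) i
  rw [← List.map_take, ← List.map_drop] at hsum
  rw [length_flatten_replicate, hPQ] at hdrift
  push_cast at hdrift
  omega

theorem exists_rotZ_le_of_flatten_eq (P Q : List α) (hPQ : P.length = Q.length) (r : ℕ)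
    (Cs : List (List α)) (C' : List α)
    (hY : (List.replicate Cs.length Q).flatten ++ Q.take r = Cs.flatten ++ C') :
    ∃ s : ℤ, Cs.length * ED P (rotZ Q s) + 2 * s.natAbs ≤
      3 * (Cs.map (ED P)).sum + ED (P.take r) C' := by
  obtain rfl | hCs := eq_or_ne Cs []
  · exact ⟨0, by simp⟩
  let shift (i : Fin Cs.length) : ℤ := (Cs.take i).flatten.length - i * Q.length
  -- every length-`|Q|` window starting inside `Y` lies in `Q^(d+2)`
  have hprefix : Cs.flatten <+: (List.replicate (Cs.length + 2) Q).flatten := by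
    refine (List.prefix_append _ C').trans ?_
    rw [← hY, List.replicate_add, List.flatten_append, List.prefix_append_right_inj]
    exact (List.take_prefix r Q).trans (by simp)
  have hlen : Cs.flatten.length ≤ Cs.length * Q.length + Q.length := by
    have := congrArg List.length hY
    simp only [List.length_append, length_flatten_replicate, List.length_take] at this
    omega
  have hblock (i : Fin Cs.length) : ED P (rotZ Q (shift i)) ≤ 2 * ED P Cs[i] := by
    rw [rotZ_natCast_sub_mul]
    refine ED_rotate_le_two_mul_ED_getElem P Q hPQ hprefix i ?_
    have := (List.take_prefix i Cs).flatten.length_le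
    rw [add_mul]
    omega
  obtain ⟨i, -, hi⟩ :=
    Finset.exists_le_of_sum_le ⟨⟨0, List.length_pos_iff.2 hCs⟩, Finset.mem_univ _⟩
    (f := fun i => Cs.length * ED P (rotZ Q (shift i)))
    (g := fun _ => 2 * (Cs.map (ED P)).sum) <| by
      calc ∑ i, Cs.length * ED P (rotZ Q (shift i))
          ≤ ∑ i : Fin Cs.length, Cs.length * (2 * ED P Cs[i]) :=
            Finset.sum_le_sum fun i _ => Nat.mul_le_mul_left _ (hblock i)
        _ = ∑ _i : Fin Cs.length, 2 * (Cs.map (ED P)).sum := by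
            simp only [← Finset.mul_sum, Fin.getElem_fin, Fin.sum_univ_fun_getElem]
            simp [mul_left_comm]
  refine ⟨shift i, ?_⟩
  have := two_mul_natAbs_length_flatten_take_sub_le P Q hPQ r hY i.2.le
  simp only [shift] at hi ⊢
  omega

theorem exists_rotZ_add_le_three_mul_ED (P Q : List α) (hPQ : P.length = Q.length) (d r : ℕ) :
    ∃ s : ℤ, ED (P.take r) (Q.take r) + (d * ED P (rotZ Q s) + 2 * s.natAbs) ≤
      3 * ED ((List.replicate d P).flatten ++ P.take r)
        ((List.replicate d Q).flatten ++ Q.take r) := by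
  obtain ⟨Cs, C', rfl, hY, hCs⟩ := exists_flatten_append_and_sum_ED_le P (P.take r)
    ((List.replicate d Q).flatten ++ Q.take r) d
  obtain ⟨s, hs⟩ := exists_rotZ_le_of_flatten_eq P Q hPQ r Cs C' hY
  have hr : (P.take r).length = (Q.take r).length := by simp [hPQ]
  have htail := ED_drop_le_two_mul (P.take r) (Cs.flatten ++ C') Cs.flatten.length
    (by rw [← hY, hr, List.length_append]; omega)
  rw [List.drop_left, ← hY, hr, List.length_append, Nat.add_sub_cancel, List.drop_left] at htail
  exact ⟨s, by omega⟩

end PeriodicEditDistance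

theorem ed_periodic_three_approx_general {α : Type*} [DecidableEq α] (P Q : List α) (p : ℕ)
    (hP : P.length = p) (hQ : Q.length = p) (n : ℕ) :
    ED (prefRep P n) (prefRep Q n) ≤
        ED (P.take (n % p)) (Q.take (n % p)) +
          sInf {m : ℕ | ∃ s : ℤ, m = (n / p) * ED P (rotZ Q s) + 2 * s.natAbs} ∧
      ED (P.take (n % p)) (Q.take (n % p)) +
          sInf {m : ℕ | ∃ s : ℤ, m = (n / p) * ED P (rotZ Q s) + 2 * s.natAbs} ≤
        3 * ED (prefRep P n) (prefRep Q n) := by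
  rw [prefRep_eq P, prefRep_eq Q, hP, hQ]
  set S := {m : ℕ | ∃ s : ℤ, m = n / p * ED P (rotZ Q s) + 2 * s.natAbs}
  constructor
  · obtain ⟨s, hs⟩ : sInf S ∈ S := Nat.sInf_mem ⟨_, 0, rfl⟩
    rw [hs]
    exact ED_flatten_replicate_append_take_le P Q _ _ s
  · obtain ⟨s, hs⟩ := exists_rotZ_add_le_three_mul_ED P Q (hP.trans hQ.symm) (n / p) (n % p)
    have : sInf S ≤ n / p * ED P (rotZ Q s) + 2 * s.natAbs := Nat.sInf_le ⟨s, rfl⟩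
    omega

/-- 3-approximation of the edit distance of two periodic strings: with
`|P| = |Q| = p > 0`, `X = P^∞[0..n)`, `Y = Q^∞[0..n)`, `d = ⌊n/p⌋`, `r = n mod p`,
the quantity `ED(P[0..r), Q[0..r)) + min_{s ∈ ℤ} (d·ED(P, Q^{↻s}) + 2|s|)`
is between `ED(X, Y)` and `3·ED(X, Y)`. -/
theorem ed_periodic_three_approx {α : Type*} [DecidableEq α] (P Q : List α) (p : ℕ)
    (hp : 0 < p) (hP : P.length = p) (hQ : Q.length = p) (n : ℕ) (hn : 0 < n) :
    ED (prefRep P n) (prefRep Q n) ≤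
        ED (P.take (n % p)) (Q.take (n % p)) +
          sInf {m : ℕ | ∃ s : ℤ, m = (n / p) * ED P (rotZ Q s) + 2 * s.natAbs} ∧
      ED (P.take (n % p)) (Q.take (n % p)) +
          sInf {m : ℕ | ∃ s : ℤ, m = (n / p) * ED P (rotZ Q s) + 2 * s.natAbs} ≤
        3 * ED (prefRep P n) (prefRep Q n) :=
  ed_periodic_three_approx_general P Q p hP hQ n
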